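/- Let K̃_{n,q} be the Dunkl q-Szász-Mirakjan-Kantorovich-Stancu operator. Then for every n ∈ ℕ⁺, 0<q<1, μ>1/2, α,β ≥ 0 and x ≥ 0, applying K̃_{n,q} to the function t ↦ t−x gives K̃_{n,q}(t−x;x) = (n/(n+β))·(α/n + 1/([2]_q[n]_q)) + (2nq/([2]_q(n+β)) − 1)·x. -/
import Mathlib


/-- The `q`-number `[x]_q = (1 - q^x)/(1 - q)` for a real exponent `x`. -/
noncomputable def qNum (q x : ℝ) : ℝ := (1 - q ^ x) / (1 - q)

/-- `θ_k = 0` if `k` is even and `1` if `k` is odd. -/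
def theta (k : ℕ) : ℕ := if Even k then 0 else 1

/-- The Dunkl `q`-gamma coefficients: `γ_{μ,q}(0) = 1`,
`γ_{μ,q}(k+1) = [2μθ_{k+1} + k + 1]_q ⬝ γ_{μ,q}(k)`. -/
noncomputable def gammaD (mu q : ℝ) : ℕ → ℝ
  | 0 => 1
  | k + 1 => qNum q (2 * mu * (theta (k + 1) : ℝ) + ((k : ℝ) + 1)) * gammaD mu q k

/-- The Dunkl `q`-exponential `E_{μ,q}(x) = Σ q^{k(k-1)/2} x^k / γ_{μ,q}(k)`. -/
noncomputable def EDunkl (mu q x : ℝ) : ℝ :=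
  ∑' k : ℕ, q ^ (k * (k - 1) / 2) * x ^ k / gammaD mu q k

/-- The Jackson `q`-integral `∫_a^b f(t) d_q t`. -/
noncomputable def jacksonInt (q : ℝ) (f : ℝ → ℝ) (a b : ℝ) : ℝ :=
  (1 - q) * (b * ∑' j : ℕ, q ^ j * f (b * q ^ j) - a * ∑' j : ℕ, q ^ j * f (a * q ^ j))

/-- Lower endpoint `[k + 2μθ_k]_q / (q^{k-2} [n]_q)`. -/
noncomputable def lowB (q mu : ℝ) (n k : ℕ) : ℝ :=
  qNum q ((k : ℝ) + 2 * mu * (theta k : ℝ)) / (q ^ ((k : ℝ) - 2) * qNum q (n : ℝ))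

/-- Upper endpoint `([k + 1 + 2μθ_k]_q - 1) / (q^{k-1} [n]_q) + 1/[n]_q`. -/
noncomputable def uppB (q mu : ℝ) (n k : ℕ) : ℝ :=
  (qNum q ((k : ℝ) + 1 + 2 * mu * (theta k : ℝ)) - 1) / (q ^ ((k : ℝ) - 1) * qNum q (n : ℝ))
    + 1 / qNum q (n : ℝ)

/-- The Dunkl `q`-Szász-Mirakjan-Kantorovich-Stancu operator `K̃_{n,q}(f;x)`. -/
noncomputable def KT (n : ℕ) (q mu α β : ℝ) (f : ℝ → ℝ) (x : ℝ) : ℝ :=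
  qNum q (n : ℝ) / EDunkl mu q (qNum q (n : ℝ) * x) *
    ∑' k : ℕ, (qNum q (n : ℝ) * x) ^ k / gammaD mu q k * q ^ (k * (k - 1) / 2) *
      jacksonInt q (fun t => f (((n : ℝ) * t + α) / ((n : ℝ) + β))) (lowB q mu n k) (uppB q mu n k)

section DunklAux
open Real Filter

lemma one_sub_ne {q : ℝ} (hq1 : q < 1) : 1 - q ≠ 0 := sub_ne_zero.mpr (Ne.symm hq1.ne)

lemma qNum_pos {q : ℝ} (hq0 : 0 < q) (hq1 : q < 1) {e : ℝ} (he : 0 < e) : 0 < qNum q e := by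
  unfold qNum
  apply div_pos _ (by linarith)
  have := Real.rpow_lt_one hq0.le hq1 he
  linarith

lemma qNum_zero (q : ℝ) : qNum q 0 = 0 := by simp [qNum]

lemma qNum_one {q : ℝ} (h : q < 1) : qNum q 1 = 1 := by
  simp [qNum, Real.rpow_one, div_self (one_sub_ne h)]

lemma qNum_two {q : ℝ} (h : q < 1) : qNum q 2 = 1 + q := by
  unfold qNum
  rw [show (2:ℝ) = ((2:ℕ):ℝ) by norm_num, Real.rpow_natCast]
  field_simp [one_sub_ne h]
  ring

lemma qNum_succ {q : ℝ} (hq0 : 0 < q) (hq1 : q < 1) (e : ℝ) :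
    qNum q (e + 1) = q * qNum q e + 1 := by
  unfold qNum
  rw [Real.rpow_add_one hq0.ne' e]
  field_simp [one_sub_ne hq1]
  ring

lemma qNum_mono {q : ℝ} (hq0 : 0 < q) (hq1 : q < 1) {a b : ℝ} (h : a ≤ b) :
    qNum q a ≤ qNum q b := by
  unfold qNum
  have h2 := Real.rpow_le_rpow_of_exponent_ge hq0 hq1.le h
  have h3 : (0:ℝ) < 1 - q := by linarith
  gcongr

lemma theta_le_one (k : ℕ) : (theta k : ℝ) ≤ 1 := by
  unfold theta; split <;> norm_num

lemma theta_nonneg (k : ℕ) : (0:ℝ) ≤ (theta k : ℝ) := Nat.cast_nonneg _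

lemma gammaD_succ (mu q : ℝ) (k : ℕ) :
    gammaD mu q (k+1) = qNum q (2 * mu * (theta (k+1) : ℝ) + ((k : ℝ) + 1)) * gammaD mu q k := rfl

lemma factor_ge_one {q mu : ℝ} (hq0 : 0 < q) (hq1 : q < 1) (hmu : 0 ≤ mu) (k : ℕ) :
    1 ≤ qNum q (2 * mu * (theta (k+1) : ℝ) + ((k : ℝ) + 1)) := by
  have h1 := theta_nonneg (k+1)
  have h2 : (0:ℝ) ≤ (k:ℝ) := Nat.cast_nonneg _
  have h := qNum_mono hq0 hq1 (show (1:ℝ) ≤ 2 * mu * (theta (k+1) : ℝ) + ((k : ℝ) + 1) by nlinarith)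
  rwa [qNum_one hq1] at h

lemma gammaD_pos {q mu : ℝ} (hq0 : 0 < q) (hq1 : q < 1) (hmu : 0 ≤ mu) (k : ℕ) :
    0 < gammaD mu q k := by
  induction k with
  | zero => norm_num [gammaD]
  | succ m ih =>
    rw [gammaD_succ]
    exact mul_pos (lt_of_lt_of_le one_pos (factor_ge_one hq0 hq1 hmu m)) ih

lemma tri (k : ℕ) : (k+1) * ((k+1) - 1) / 2 = k * (k-1) / 2 + k := by
  have h : (k+1) * k = k * (k-1) + 2 * k := by
    cases k with
    | zero => rfl
    | succ m => simp only [Nat.succ_sub_one]; ring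
  simp only [Nat.add_sub_cancel]
  rw [h, Nat.add_mul_div_left _ _ (by norm_num : 0 < 2)]

lemma uppB_eq {q mu : ℝ} (hq0 : 0 < q) (hq1 : q < 1) (n k : ℕ) :
    uppB q mu n k = lowB q mu n k + 1 / qNum q (n : ℝ) := by
  unfold uppB lowB
  congr 1
  have h1 : (k : ℝ) + 1 + 2 * mu * (theta k : ℝ) = ((k : ℝ) + 2 * mu * (theta k : ℝ)) + 1 := by
    ring
  rw [h1, qNum_succ hq0 hq1, show ((k:ℝ) - 1) = ((k:ℝ) - 2) + 1 by ring,
    Real.rpow_add_one hq0.ne']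
  rw [add_sub_cancel_right, show q ^ ((k:ℝ)-2) * q * qNum q (n:ℝ)
    = q * (q ^ ((k:ℝ)-2) * qNum q (n:ℝ)) by ring,
    mul_div_mul_left _ _ hq0.ne']

-- Jackson integral of an affine function

lemma jackson_affine {q : ℝ} (hq0 : 0 < q) (hq1 : q < 1) (c d a b : ℝ) :
    jacksonInt q (fun t => c * t + d) a b =
      c * (b^2 - a^2) / (1 + q) + d * (b - a) := by
  have hq2 : q^2 < 1 := by nlinarith
  have hq2' : (0:ℝ) ≤ q^2 := sq_nonneg q
  have hS : ∀ u : ℝ, ∑' j : ℕ, q ^ j * (c * (u * q ^ j) + d)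
      = c * u * (1 - q^2)⁻¹ + d * (1 - q)⁻¹ := by
    intro u
    have h1 : ∀ j : ℕ, q ^ j * (c * (u * q ^ j) + d) = c * u * (q^2) ^ j + d * q ^ j := by
      intro j; ring
    rw [tsum_congr h1, Summable.tsum_add ((summable_geometric_of_lt_one hq2' hq2).mul_left _)
      ((summable_geometric_of_lt_one hq0.le hq1).mul_left _),
      tsum_mul_left, tsum_mul_left, tsum_geometric_of_lt_one hq2' hq2,
      tsum_geometric_of_lt_one hq0.le hq1]
  unfold jacksonInt
  rw [hS, hS]
  have h2 : (1:ℝ) - q^2 ≠ 0 := by nlinarith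
  have h3 : (1:ℝ) + q ≠ 0 := by nlinarith
  field_simp [one_sub_ne hq1]
  ring

noncomputable def wD (q mu y : ℝ) (k : ℕ) : ℝ := y ^ k / gammaD mu q k * q ^ (k * (k - 1) / 2)

lemma wD_succ (q mu y : ℝ) (k : ℕ) :
    wD q mu y (k+1)
      = wD q mu y k * (y * q ^ k / qNum q (2 * mu * (theta (k+1) : ℝ) + ((k : ℝ) + 1))) := by
  unfold wD
  rw [tri, pow_add q, pow_succ y,
    show gammaD mu q (k+1) = qNum q (2 * mu * (theta (k+1) : ℝ) + ((k : ℝ) + 1)) * gammaD mu q k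
      from rfl]
  ring

lemma wD_nonneg {q mu y : ℝ} (hq0 : 0 < q) (hq1 : q < 1) (hmu : 0 ≤ mu) (hy : 0 ≤ y) (k : ℕ) :
    0 ≤ wD q mu y k :=
  mul_nonneg (div_nonneg (pow_nonneg hy _) (gammaD_pos hq0 hq1 hmu k).le) (pow_nonneg hq0.le _)

lemma wD_zero (q mu y : ℝ) : wD q mu y 0 = 1 := by simp [wD, gammaD]

lemma summable_wD {q mu y : ℝ} (hq0 : 0 < q) (hq1 : q < 1) (hmu : 0 ≤ mu) (hy : 0 ≤ y) :
    Summable (wD q mu y) := by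
  apply summable_of_ratio_norm_eventually_le (r := 1/2) (by norm_num)
  have hev : ∀ᶠ k : ℕ in atTop, q ^ k ≤ (1/2) / (y + 1) := by
    have := (tendsto_pow_atTop_nhds_zero_of_lt_one hq0.le hq1)
    exact this.eventually_le_const (by positivity)
  filter_upwards [hev] with k hk
  rw [Real.norm_eq_abs, Real.norm_eq_abs, abs_of_nonneg (wD_nonneg hq0 hq1 hmu hy _),
    abs_of_nonneg (wD_nonneg hq0 hq1 hmu hy _), wD_succ]
  have hP := factor_ge_one hq0 hq1 hmu k
  have hw := wD_nonneg hq0 hq1 hmu hy k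
  have h1 : y * q ^ k / qNum q (2 * mu * (theta (k+1) : ℝ) + ((k : ℝ) + 1)) ≤ y * q ^ k := by
    apply div_le_self (mul_nonneg hy (pow_nonneg hq0.le _)) hP
  have h2 : y * q ^ k ≤ 1/2 := by
    calc y * q ^ k ≤ y * ((1/2)/(y+1)) := by
          apply mul_le_mul_of_nonneg_left hk hy
      _ ≤ 1/2 := by
          rw [div_eq_mul_inv]
          have : y * (1/2 * (y+1)⁻¹) = (1/2) * (y * (y+1)⁻¹) := by ring
          rw [this]
          have : y * (y+1)⁻¹ ≤ 1 := by
            rw [← div_eq_mul_inv]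
            apply div_le_one_of_le₀ (by linarith) (by linarith)
          nlinarith
  calc wD q mu y k * (y * q ^ k / qNum q (2 * mu * (theta (k+1) : ℝ) + ((k : ℝ) + 1)))
      ≤ wD q mu y k * (1/2) := by
        apply mul_le_mul_of_nonneg_left _ hw
        exact le_trans h1 h2
    _ = 1/2 * wD q mu y k := by ring

lemma lowB_zero {q mu : ℝ} (n : ℕ) : lowB q mu n 0 = 0 := by
  have : ((0:ℕ) : ℝ) + 2 * mu * (theta 0 : ℝ) = 0 := by
    simp [theta]
  rw [lowB, this, qNum_zero, zero_div]

lemma key_shift {q mu : ℝ} (hq0 : 0 < q) (hq1 : q < 1) (hmu : 0 ≤ mu) (n : ℕ) (x : ℝ)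
    (hQ : qNum q (n:ℝ) ≠ 0) (k : ℕ) :
    wD q mu (qNum q (n:ℝ) * x) (k+1) * lowB q mu n (k+1)
      = q * x * wD q mu (qNum q (n:ℝ) * x) k := by
  set Q := qNum q (n:ℝ) with hQdef
  set P := qNum q (2 * mu * (theta (k+1) : ℝ) + ((k : ℝ) + 1)) with hP
  have hPpos : 0 < P := lt_of_lt_of_le one_pos (factor_ge_one hq0 hq1 hmu k)
  have hγ : gammaD mu q k ≠ 0 := (gammaD_pos hq0 hq1 hmu k).ne'
  have harg : ((k+1 : ℕ) : ℝ) + 2 * mu * (theta (k+1) : ℝ)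
      = 2 * mu * (theta (k+1) : ℝ) + ((k : ℝ) + 1) := by push_cast; ring
  have hrpow : q ^ (((k+1 : ℕ) : ℝ) - 2) = q ^ k / q := by
    rw [show (((k+1 : ℕ) : ℝ) - 2) = (k : ℝ) - 1 by push_cast; ring,
      Real.rpow_sub hq0, Real.rpow_one, Real.rpow_natCast]
  rw [wD_succ, lowB, harg, ← hP, hrpow, ← hQdef]
  have hqk : q ^ k ≠ 0 := (pow_pos hq0 k).ne'
  field_simp

end DunklAux

open Real Filter

/-- `K̃_{n,q}(t-x; x) = (n/(n+β))(α/n + 1/([2]_q[n]_q)) + (2nq/([2]_q(n+β)) - 1) x`. -/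
theorem KT_sub_x (n : ℕ) (hn : 0 < n) (q mu α β x : ℝ)
    (hq0 : 0 < q) (hq1 : q < 1) (hmu : 1 / 2 < mu) (hα : 0 ≤ α) (hβ : 0 ≤ β) (hx : 0 ≤ x) :
    KT n q mu α β (fun t => t - x) x =
      (n : ℝ) / ((n : ℝ) + β) * (α / (n : ℝ) + 1 / (qNum q 2 * qNum q (n : ℝ)))
        + (2 * (n : ℝ) * q / (qNum q 2 * ((n : ℝ) + β)) - 1) * x := by
  have hmu0 : (0:ℝ) ≤ mu := by linarith
  have hnR : (0:ℝ) < (n:ℝ) := by exact_mod_cast hn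
  have hQ : 0 < qNum q (n:ℝ) := qNum_pos hq0 hq1 hnR
  set Q := qNum q (n:ℝ) with hQdef
  set y := Q * x with hydef
  have hy : 0 ≤ y := mul_nonneg hQ.le hx
  have hsum : Summable (wD q mu y) := summable_wD hq0 hq1 hmu0 hy
  have hNβ : (0:ℝ) < (n:ℝ) + β := by linarith
  have h1q : (0:ℝ) < 1 + q := by linarith
  set c : ℝ := (n:ℝ) / ((n:ℝ) + β) with hcdef
  set d : ℝ := α / ((n:ℝ) + β) - x with hddef
  set A : ℝ := 2 * c / ((1 + q) * Q) with hAdef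
  set B : ℝ := c / ((1 + q) * Q^2) + d / Q with hBdef
  -- the shifted series
  set g : ℕ → ℝ := fun k => wD q mu y k * lowB q mu n k with hgdef
  have hgs : ∀ k, g (k+1) = q * x * wD q mu y k := fun k => key_shift hq0 hq1 hmu0 n x hQ.ne' k
  have hsum_g : Summable g := by
    rw [← summable_nat_add_iff 1]
    have : (fun k => g (k+1)) = fun k => q * x * wD q mu y k := funext hgs
    rw [this]
    exact hsum.mul_left _
  have htsum_g : ∑' k, g k = q * x * ∑' k, wD q mu y k := by
    rw [Summable.tsum_eq_zero_add hsum_g]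
    have h0 : g 0 = 0 := by rw [hgdef]; simp [lowB_zero]
    have : (fun k => g (k+1)) = fun k => q * x * wD q mu y k := funext hgs
    rw [h0, this, tsum_mul_left, zero_add]
  have hE : EDunkl mu q y = ∑' k, wD q mu y k := by
    apply tsum_congr
    intro k
    rw [wD]
    ring
  have hE1 : 1 ≤ EDunkl mu q y := by
    rw [hE, ← wD_zero q mu y]
    exact Summable.le_tsum hsum 0 (fun i _ => wD_nonneg hq0 hq1 hmu0 hy i)
  have hEne : EDunkl mu q y ≠ 0 := by linarith
  -- jackson integral values
  have hf : (fun t => ((n:ℝ) * t + α) / ((n:ℝ) + β) - x) = fun t => c * t + d := by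
    funext t
    rw [hcdef, hddef]
    field_simp
    ring
  have hJ : ∀ k, jacksonInt q (fun t => ((n:ℝ) * t + α) / ((n:ℝ) + β) - x)
      (lowB q mu n k) (uppB q mu n k) = A * lowB q mu n k + B := by
    intro k
    rw [hf, jackson_affine hq0 hq1, uppB_eq hq0 hq1, ← hQdef, hAdef, hBdef]
    field_simp
    ring
  -- main computation
  have ht : ∀ k : ℕ, y ^ k / gammaD mu q k * q ^ (k * (k - 1) / 2) *
      jacksonInt q (fun t => ((n:ℝ) * t + α) / ((n:ℝ) + β) - x)
        (lowB q mu n k) (uppB q mu n k) = A * g k + B * wD q mu y k := by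
    intro k
    rw [hJ k, hgdef]
    show wD q mu y k * _ = _
    ring
  simp only [KT]
  rw [← hQdef, ← hydef, tsum_congr ht,
    Summable.tsum_add (hsum_g.mul_left A) (hsum.mul_left B), tsum_mul_left, tsum_mul_left,
    htsum_g, ← hE]
  rw [qNum_two hq1]
  rw [hAdef, hBdef, hcdef, hddef]
  field_simp
  ring
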